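/- arXiv:0705.3202 — 3 statements merged into one kernel-verified Lean document; each statement's English description precedes it below -/
import Mathlib

section
/- With the coordinate transformation of the previous context, the Jacobian determinant det(∂a'_j/∂a_k) equals (1/(1 + (a_{l₁}+⋯+a_{l_m})s))². More precisely, for the map sending (a_{l₁},…,a_{l_m}) to (a'_{l₁},…,a'_{l_m}) with a'_{l_j} = a_{l_j}(1+(a_{l₁}+⋯+a_{l_{j-1}})s)/(1+(a_{l₁}+⋯+a_{l_j})s) and fixing all other coordinates, the Jacobian matrix is lower triangular with respect to the ordering l₁ < … < l_m when restricted to the varying coordinates, and its determinant equals ∏_{j=1}^m ((1+(a_{l₁}+⋯+a_{l_{j-1}})s)/(1+(a_{l₁}+⋯+a_{l_j})s))² = (1+(a_{l₁}+⋯+a_{l_m})s)^{-2}. -/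
/-!
The `j`-th new coordinate depends only on `c 0, …, c j`, so the Jacobian is lower triangular.
Along the `j`-th coordinate line it is `t ↦ (c j + t) A / (A + (c j + t) s)` with
`A = 1 + (c 0 + ⋯ + c (j-1)) s`, whose derivative at `0` is `(A / B)²`, `B = A + c j s`.
The product of these diagonal entries telescopes to `(1 / (1 + (c 0 + ⋯ + c (m-1)) s))²`.
-/

open Finset

section PrefixSum

variable {M : Type*} [AddCommMonoid M] {m : ℕ}

def prefixSum (n : ℕ) (c : Fin m → M) : M :=
  ∑ i ∈ univ.filter (fun i : Fin m => (i : ℕ) < n), c i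

@[simp]
lemma prefixSum_zero (c : Fin m → M) : prefixSum 0 c = 0 := by
  simp [prefixSum]

lemma prefixSum_succ (j : Fin m) (c : Fin m → M) :
    prefixSum (j + 1) c = prefixSum j c + c j := by
  have : univ.filter (fun i : Fin m => (i : ℕ) < j + 1)
      = insert j (univ.filter (fun i : Fin m => (i : ℕ) < j)) := by
    ext i
    simp [le_iff_eq_or_lt, Fin.val_inj]
  rw [prefixSum, this, sum_insert (by simp), add_comm, prefixSum]

lemma prefixSum_add (n : ℕ) (c d : Fin m → M) :
    prefixSum n (c + d) = prefixSum n c + prefixSum n d :=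
  sum_add_distrib

lemma prefixSum_single (n : ℕ) (k : Fin m) (x : M) :
    prefixSum n (Pi.single k x) = if (k : ℕ) < n then x else 0 := by
  simp [prefixSum, Pi.single_apply]

end PrefixSum

lemma differentiable_prefixSum {𝕜 : Type*} [NontriviallyNormedField 𝕜] {m : ℕ} (n : ℕ) :
    Differentiable 𝕜 (prefixSum (M := 𝕜) (m := m) n) := by
  unfold prefixSum
  fun_prop

lemma prod_range_div_succ₀ {G : Type*} [CommGroupWithZero G] (f : ℕ → G) (n : ℕ)
    (hf : ∀ i ≤ n, f i ≠ 0) : ∏ i ∈ range n, f i / f (i + 1) = f 0 / f n := by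
  induction n with
  | zero => simp [div_self (hf 0 le_rfl)]
  | succ n ih =>
    rw [prod_range_succ, ih fun i hi => hf i (by omega),
      div_mul_div_cancel₀ (hf n (by omega))]

section CoordChange

variable {𝕜 : Type*} [NontriviallyNormedField 𝕜] {m : ℕ}

def coordChange (s : 𝕜) (c : Fin m → 𝕜) (j : Fin m) : 𝕜 :=
  c j * (1 + prefixSum j c * s) / (1 + prefixSum (j + 1) c * s)

lemma differentiableAt_coordChange (s : 𝕜) {c : Fin m → 𝕜} (j : Fin m)
    (hc : 1 + prefixSum (j + 1) c * s ≠ 0) :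
    DifferentiableAt 𝕜 (fun c => coordChange s c j) c := by
  have := differentiable_prefixSum (𝕜 := 𝕜) (m := m)
  unfold coordChange
  fun_prop (disch := assumption)

lemma coordChange_add_smul_single_of_lt (s : 𝕜) (c : Fin m → 𝕜) {j k : Fin m}
    (hjk : j < k) (t : 𝕜) :
    coordChange s (c + t • Pi.single k 1) j = coordChange s c j := by
  have hkj : ¬ (k : ℕ) < j := by omega
  have hkj' : ¬ (k : ℕ) < j + 1 := by omega
  simp [coordChange, ← Pi.single_smul', prefixSum_add, prefixSum_single, hjk.ne', hkj, hkj']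

lemma coordChange_add_smul_single_self (s : 𝕜) (c : Fin m → 𝕜) (j : Fin m) (t : 𝕜) :
    coordChange s (c + t • Pi.single j 1) j =
      (c j + t) * (1 + prefixSum j c * s) / (1 + prefixSum j c * s + (c j + t) * s) := by
  simp [coordChange, ← Pi.single_smul', prefixSum_add, prefixSum_single, prefixSum_succ]
  ring

lemma fderiv_coordChange_single_of_lt (s : 𝕜) {c : Fin m → 𝕜} {j k : Fin m} (hjk : j < k)
    (hc : 1 + prefixSum (j + 1) c * s ≠ 0) :
    fderiv 𝕜 (fun c => coordChange s c j) c (Pi.single k 1) = 0 := by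
  rw [← (differentiableAt_coordChange s j hc).lineDeriv_eq_fderiv, lineDeriv]
  simp only [coordChange_add_smul_single_of_lt s c hjk, deriv_const]

lemma fderiv_coordChange_single_self (s : 𝕜) {c : Fin m → 𝕜} (j : Fin m)
    (hc : 1 + prefixSum (j + 1) c * s ≠ 0) :
    fderiv 𝕜 (fun c => coordChange s c j) c (Pi.single j 1) =
      ((1 + prefixSum j c * s) / (1 + prefixSum (j + 1) c * s)) ^ 2 := by
  rw [← (differentiableAt_coordChange s j hc).lineDeriv_eq_fderiv, lineDeriv]
  simp only [coordChange_add_smul_single_self]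
  set A := 1 + prefixSum j c * s
  have hB : A + c j * s ≠ 0 := by rwa [prefixSum_succ, add_mul, ← add_assoc] at hc
  have hline : HasDerivAt (fun t : 𝕜 => c j + t) 1 0 := (hasDerivAt_id' 0).const_add (c j)
  have := (hline.mul_const A).fun_div ((hline.mul_const s).const_add A) (by simpa using hB)
  rw [this.deriv, prefixSum_succ]
  field_simp
  ring

end CoordChange

/-- The Jacobian of the coordinate transformation
`b = (a_{l₁},…,a_{l_m}) ↦ (a'_{l₁},…,a'_{l_m})`, where
`a'_{l_j} = a_{l_j}(1 + (a_{l₁}+⋯+a_{l_{j-1}})s)/(1 + (a_{l₁}+⋯+a_{l_j})s)`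
(all other coordinates being fixed), is lower triangular with determinant
`∏_{j=1}^m ((1+(a_{l₁}+⋯+a_{l_{j-1}})s)/(1+(a_{l₁}+⋯+a_{l_j})s))²
  = (1+(a_{l₁}+⋯+a_{l_m})s)⁻²`. -/
theorem jacobian_lower_triangular_det (m : ℕ) (s : ℂ) (b : Fin m → ℂ)
    (T : ℕ → (Fin m → ℂ) → ℂ)
    (hT : ∀ j c, T j c = ∑ i ∈ Finset.univ.filter (fun i : Fin m => (i : ℕ) < j), c i)
    (Φ : (Fin m → ℂ) → Fin m → ℂ)
    (hΦ : ∀ c (j : Fin m),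
      Φ c j = c j * (1 + T j c * s) / (1 + T (j + 1) c * s))
    (hden : ∀ j : ℕ, j ≤ m → 1 + T j b * s ≠ 0)
    (J : Matrix (Fin m) (Fin m) ℂ)
    (hJ : ∀ j k : Fin m, J j k = fderiv ℂ (fun c => Φ c j) b (Pi.single k 1)) :
    (∀ j k : Fin m, (j : ℕ) < (k : ℕ) → J j k = 0) ∧
    J.det = ∏ j : Fin m,
      ((1 + T j b * s) / (1 + T ((j : ℕ) + 1) b * s)) ^ 2 ∧
    J.det = (1 / (1 + T m b * s)) ^ 2 := by
  obtain rfl : T = prefixSum := funext₂ hT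
  obtain rfl : Φ = coordChange s := funext₂ hΦ
  have hden_succ (j : Fin m) : 1 + prefixSum (j + 1) b * s ≠ 0 := hden _ j.isLt
  have hupper (j k : Fin m) (hjk : (j : ℕ) < k) : J j k = 0 := by
    rw [hJ, fderiv_coordChange_single_of_lt s hjk (hden_succ j)]
  have hdet : J.det = ∏ j : Fin m,
      ((1 + prefixSum j b * s) / (1 + prefixSum (j + 1) b * s)) ^ 2 := by
    rw [J.det_of_isLowerTriangular hupper]
    exact prod_congr rfl fun j _ => by rw [hJ, fderiv_coordChange_single_self s j (hden_succ j)]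
  refine ⟨hupper, hdet, ?_⟩
  rw [hdet, prod_pow,
    Fin.prod_univ_eq_prod_range (fun i => (1 + prefixSum i b * s) / (1 + prefixSum (i + 1) b * s)),
    prod_range_div_succ₀ _ m hden]
  simp
end

section
/- Let z > 0 and h ∈ ℝ, and define the contour integral S(h) = ∮_{|u|=1} exp((1/z)(u + e^h/u)) du/u over the unit circle (counterclockwise). Then S(h) = 2πi · ∑_{k=0}^∞ e^{kh}/(z^{2k} (k!)²), and S satisfies the differential equation z² S''(h) = e^h S(h), where S'' denotes the second derivative in h. Equivalently, S(h) = 2πi·I₀(2e^{h/2}/z), where I₀ is the modified Bessel function of the first kind. -/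
open Complex

/-- Modified Bessel function of the first kind `I₀(x) = ∑_{k≥0} (x/2)^{2k}/(k!)²`. -/
noncomputable def besselI0 (x : ℂ) : ℂ :=
  ∑' k : ℕ, (x / 2) ^ (2 * k) / ((k.factorial : ℂ)) ^ 2

namespace Sl2Aux

open MeasureTheory intervalIntegral Metric

noncomputable def E (z : ℝ) (a : ℂ) (θ : ℝ) : ℂ :=
  Complex.exp ((Complex.exp (θ * I) + a * Complex.exp (-(θ * I))) / z)

noncomputable def G (z : ℝ) (n : ℕ) (h : ℝ) : ℂ :=
  ∫ θ in (0:ℝ)..(2 * Real.pi), Complex.exp (-(θ * I)) ^ n * E z (Complex.exp h) θ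

lemma nexp1 (θ : ℝ) : ‖Complex.exp (θ * I)‖ = 1 := by
  simp

lemma nexp2 (θ : ℝ) : ‖Complex.exp (-(θ * I))‖ = 1 := by
  simp [Complex.norm_exp]

lemma continuous_E (z : ℝ) (a : ℂ) : Continuous (E z a) := by
  unfold E; fun_prop

lemma norm_E_le (z : ℝ) (hz : 0 < z) (a : ℂ) (θ : ℝ) :
    ‖E z a θ‖ ≤ Real.exp ((1 + ‖a‖) / z) := by
  rw [E, Complex.norm_exp]
  apply Real.exp_le_exp.2
  calc ((Complex.exp (θ * I) + a * Complex.exp (-(θ * I))) / (z:ℂ)).re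
      ≤ ‖((Complex.exp (θ * I) + a * Complex.exp (-(θ * I))) / (z:ℂ))‖ :=
        Complex.re_le_norm _
    _ = ‖Complex.exp (θ * I) + a * Complex.exp (-(θ * I))‖ / z := by
        rw [norm_div]; simp [abs_of_pos hz]
    _ ≤ (1 + ‖a‖) / z := by
        apply div_le_div_of_nonneg_right ?_ hz.le
        calc ‖Complex.exp (θ * I) + a * Complex.exp (-(θ * I))‖
            ≤ ‖Complex.exp ((θ:ℂ) * I)‖ + ‖a * Complex.exp (-(θ * I))‖ := norm_add_le _ _
          _ = 1 + ‖a‖ := by rw [norm_mul, nexp1, nexp2]; ring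

lemma exp_tsum (w : ℂ) : Complex.exp w = ∑' n : ℕ, w ^ n / n.factorial := by
  rw [Complex.exp_eq_exp_ℂ, NormedSpace.exp_eq_tsum_div]

lemma summable_norm_exp_series (w : ℂ) :
    Summable fun n : ℕ => ‖w ^ n / (n.factorial : ℂ)‖ := by
  refine (Real.summable_pow_div_factorial ‖w‖).congr fun n => ?_
  rw [norm_div, norm_pow]
  norm_num

lemma circle_eq (z : ℝ) (a : ℂ) :
    (∮ u in C(0, 1), Complex.exp ((u + a / u) / z) / u)
      = I * ∫ θ in (0:ℝ)..(2 * Real.pi), E z a θ := by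
  rw [circleIntegral, ← intervalIntegral.integral_const_mul]
  refine intervalIntegral.integral_congr fun θ _ => ?_
  have h1 : circleMap 0 1 θ = Complex.exp (θ * I) := by
    simp [circleMap]
  have hne : Complex.exp ((θ:ℂ) * I) ≠ 0 := Complex.exp_ne_zero _
  rw [deriv_circleMap, h1, smul_eq_mul, E]
  rw [div_eq_mul_inv a, ← Complex.exp_neg]
  field_simp

/-- the double-series terms -/
noncomputable def F (z : ℝ) (a : ℂ) (p : ℕ × ℕ) (θ : ℝ) : ℂ :=
  ((Complex.exp (θ * I) / z) ^ p.1 / p.1.factorial) *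
    ((a * Complex.exp (-(θ * I)) / z) ^ p.2 / p.2.factorial)

lemma E_eq_tsum (z : ℝ) (a : ℂ) (θ : ℝ) : E z a θ = ∑' p : ℕ × ℕ, F z a p θ := by
  rw [E]
  have harg : (Complex.exp (θ * I) + a * Complex.exp (-(θ * I))) / (z:ℂ)
      = Complex.exp (θ * I) / z + a * Complex.exp (-(θ * I)) / z := by ring
  rw [harg, Complex.exp_add, exp_tsum (Complex.exp (θ * I) / z),
    exp_tsum (a * Complex.exp (-(θ * I)) / z)]
  simp only [F]
  exact tsum_mul_tsum_of_summable_norm (summable_norm_exp_series _) (summable_norm_exp_series _)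

lemma norm_F (z : ℝ) (hz : 0 < z) (a : ℂ) (p : ℕ × ℕ) (θ : ℝ) :
    ‖F z a p θ‖ = ((1/z) ^ p.1 / p.1.factorial) * ((‖a‖/z) ^ p.2 / p.2.factorial) := by
  rw [F, norm_mul, norm_div, norm_div, norm_pow, norm_pow, norm_div, norm_div, norm_mul,
    nexp1, nexp2]
  simp [abs_of_pos hz]

lemma summable_normF (z : ℝ) (hz : 0 < z) (a : ℂ) :
    Summable fun p : ℕ × ℕ => ((1/z) ^ p.1 / p.1.factorial) * ((‖a‖/z) ^ p.2 / p.2.factorial) := by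
  apply Summable.mul_of_nonneg (Real.summable_pow_div_factorial _)
    (Real.summable_pow_div_factorial _)
  · intro m; positivity
  · intro k; positivity

lemma F_rewrite (z : ℝ) (hz : 0 < z) (a : ℂ) (p : ℕ × ℕ) (θ : ℝ) :
    F z a p θ = (a ^ p.2 / ((z:ℂ) ^ (p.1 + p.2) * p.1.factorial * p.2.factorial)) *
      Complex.exp ((((p.1 : ℂ) - p.2) * I) * θ) := by
  have h1 : Complex.exp ((((p.1 : ℂ) - p.2) * I) * θ)
      = Complex.exp (θ * I) ^ p.1 * Complex.exp (-(θ * I)) ^ p.2 := by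
    rw [← Complex.exp_nat_mul, ← Complex.exp_nat_mul, ← Complex.exp_add]
    congr 1; ring
  have hz' : (z:ℂ) ≠ 0 := Complex.ofReal_ne_zero.2 hz.ne'
  have h2 : (p.1.factorial : ℂ) ≠ 0 := Nat.cast_ne_zero.2 p.1.factorial_ne_zero
  have h3 : (p.2.factorial : ℂ) ≠ 0 := Nat.cast_ne_zero.2 p.2.factorial_ne_zero
  have hzp : ∀ n : ℕ, (z:ℂ) ^ n ≠ 0 := fun n => pow_ne_zero _ hz'
  rw [F, h1, div_pow, div_pow, mul_pow, pow_add, div_div, div_div, div_mul_div_comm,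
    div_mul_eq_mul_div, div_eq_div_iff
      (mul_ne_zero (mul_ne_zero (hzp _) h2) (mul_ne_zero (hzp _) h3))
      (mul_ne_zero (mul_ne_zero (mul_ne_zero (hzp _) (hzp _)) h2) h3)]
  ring

lemma integral_F (z : ℝ) (hz : 0 < z) (a : ℂ) (p : ℕ × ℕ) :
    ∫ θ in (0:ℝ)..(2 * Real.pi), F z a p θ
      = if p.1 = p.2 then
          ((2 * Real.pi : ℝ) : ℂ) * (a ^ p.2 / ((z:ℂ) ^ (p.1 + p.2) * p.1.factorial * p.2.factorial))
        else 0 := by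
  simp only [F_rewrite z hz a p]
  rw [intervalIntegral.integral_const_mul]
  rcases eq_or_ne p.1 p.2 with hp | hp
  · have hc : ((p.1 : ℂ) - p.2) = 0 := by rw [hp]; ring
    simp only [hc, zero_mul, Complex.exp_zero, if_pos hp]
    rw [intervalIntegral.integral_const]
    simp only [sub_zero, Complex.real_smul, mul_one]
    push_cast; ring
  · have hc : (((p.1 : ℂ) - p.2) * I) ≠ 0 :=
      mul_ne_zero (sub_ne_zero.2 (by exact_mod_cast fun h => hp (Nat.cast_injective h))) I_ne_zero
    have : (∫ θ in (0:ℝ)..(2 * Real.pi), Complex.exp ((((p.1 : ℂ) - p.2) * I) * θ)) = 0 := by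
      rw [integral_exp_mul_complex hc]
      have h1 : Complex.exp ((((p.1 : ℂ) - p.2) * I) * ((2 * Real.pi : ℝ) : ℂ)) = 1 := by
        have := Complex.exp_int_mul_two_pi_mul_I ((p.1 : ℤ) - p.2)
        rw [← this]; congr 1; push_cast; ring
      rw [h1]
      simp
    rw [this, mul_zero, if_neg hp]

lemma integral_E (z : ℝ) (hz : 0 < z) (a : ℂ) :
    (∫ θ in (0:ℝ)..(2 * Real.pi), E z a θ)
      = ((2 * Real.pi : ℝ) : ℂ) * ∑' k : ℕ, a ^ k / ((z:ℂ) ^ (2 * k) * (k.factorial : ℂ) ^ 2) := by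
  have h2pi : (0:ℝ) ≤ 2 * Real.pi := by positivity
  have contF : ∀ p : ℕ × ℕ, Continuous (F z a p) := by
    intro p; unfold F; fun_prop
  have hint : ∀ p : ℕ × ℕ, IntegrableOn (F z a p) (Set.Ioc 0 (2 * Real.pi)) volume :=
    fun p => (contF p).integrableOn_Ioc
  have hsum : Summable fun p : ℕ × ℕ => ∫ θ in Set.Ioc 0 (2 * Real.pi), ‖F z a p θ‖ := by
    apply Summable.of_nonneg_of_le
      (fun p => integral_nonneg fun θ => norm_nonneg _)
      (fun p => ?_) (((summable_normF z hz a)).mul_right (2 * Real.pi))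
    rw [MeasureTheory.setIntegral_congr_fun measurableSet_Ioc
      (fun θ _ => norm_F z hz a p θ)]
    rw [MeasureTheory.setIntegral_const]
    rw [Real.volume_real_Ioc, sub_zero, smul_eq_mul, max_eq_left h2pi]
    exact le_of_eq (by ring)
  have hswap := MeasureTheory.hasSum_integral_of_summable_integral_norm
    (F := fun p : ℕ × ℕ => F z a p) (μ := volume.restrict (Set.Ioc 0 (2 * Real.pi))) hint hsum
  have hE : (∫ θ in Set.Ioc 0 (2 * Real.pi), E z a θ)
      = ∫ θ in Set.Ioc 0 (2 * Real.pi), ∑' p : ℕ × ℕ, F z a p θ :=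
    setIntegral_congr_fun measurableSet_Ioc fun θ _ => E_eq_tsum z a θ
  have h1 : (∫ θ in (0:ℝ)..(2 * Real.pi), E z a θ)
      = ∑' p : ℕ × ℕ, ∫ θ in (0:ℝ)..(2 * Real.pi), F z a p θ := by
    rw [intervalIntegral.integral_of_le h2pi, hE]
    rw [← hswap.tsum_eq]
    exact tsum_congr fun p => (intervalIntegral.integral_of_le h2pi).symm
  rw [h1]
  simp only [integral_F z hz a]
  have hsum2 : Summable fun p : ℕ × ℕ =>
      (if p.1 = p.2 then
        ((2 * Real.pi : ℝ) : ℂ) * (a ^ p.2 / ((z:ℂ) ^ (p.1 + p.2) * p.1.factorial * p.2.factorial))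
      else 0) := by
    exact hswap.summable.congr fun p => by
      rw [← intervalIntegral.integral_of_le h2pi, integral_F z hz a]
  rw [Summable.tsum_prod' hsum2 (fun m => summable_of_ne_finset_zero (s := {m})
    (fun k hk => if_neg fun h => hk (by simp only [Finset.mem_singleton]; exact h.symm)))]
  have hinner : ∀ m : ℕ, (∑' k : ℕ,
      (if (m, k).1 = (m, k).2 then
        ((2 * Real.pi : ℝ) : ℂ) * (a ^ (m, k).2 / ((z:ℂ) ^ ((m, k).1 + (m, k).2)
          * (m, k).1.factorial * (m, k).2.factorial))
      else 0))
      = ((2 * Real.pi : ℝ) : ℂ) * (a ^ m / ((z:ℂ) ^ (2 * m) * (m.factorial : ℂ) ^ 2)) := by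
    intro m
    rw [tsum_eq_single m (fun k hk => if_neg fun h => hk h.symm)]
    rw [if_pos rfl, two_mul, sq]
    ring
  simp only [hinner]
  rw [tsum_mul_left]

/-- derivative of `E` in the parameter composed with `exp`. -/
lemma hasDerivAt_E_param (z : ℝ) (θ : ℝ) (x : ℝ) :
    HasDerivAt (fun y : ℝ => E z (Complex.exp y) θ)
      (Complex.exp x * Complex.exp (-(θ * I)) / z * E z (Complex.exp x) θ) x := by
  have hinner : HasDerivAt
      (fun w : ℂ => (Complex.exp (θ * I) + Complex.exp w * Complex.exp (-(θ * I))) / z)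
      (Complex.exp x * Complex.exp (-(θ * I)) / z) (x : ℂ) := by
    exact (((Complex.hasDerivAt_exp _).mul_const _).const_add _).div_const _
  have h2 := (Complex.hasDerivAt_exp
    ((Complex.exp (θ * I) + Complex.exp (x:ℂ) * Complex.exp (-(θ * I))) / z)).comp (x:ℂ) hinner
  have h3 := h2.comp_ofReal
  have : E z (Complex.exp x) θ * (Complex.exp x * Complex.exp (-(θ * I)) / z)
      = Complex.exp x * Complex.exp (-(θ * I)) / z * E z (Complex.exp x) θ := by ring
  rw [← this]
  exact h3

lemma hasDerivAt_G (z : ℝ) (hz : 0 < z) (n : ℕ) (h : ℝ) :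
    HasDerivAt (G z n) (Complex.exp h / z * G z (n + 1) h) h := by
  set F' : ℝ → ℝ → ℂ := fun x θ =>
    Complex.exp x / z * (Complex.exp (-(θ * I)) ^ (n + 1) * E z (Complex.exp x) θ) with hF'
  have contE : ∀ x : ℝ, Continuous fun θ : ℝ => Complex.exp (-(θ * I)) ^ n
      * E z (Complex.exp x) θ := by
    intro x; exact (Continuous.pow (by fun_prop) n).mul (continuous_E z _)
  have contF' : ∀ x : ℝ, Continuous (F' x) := by
    intro x
    exact continuous_const.mul ((Continuous.pow (by fun_prop) (n+1)).mul (continuous_E z _))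
  have key := intervalIntegral.hasDerivAt_integral_of_dominated_loc_of_deriv_le
    (F := fun x θ => Complex.exp (-(θ * I)) ^ n * E z (Complex.exp x) θ)
    (𝕜 := ℝ) (F' := F') (x₀ := h) (a := (0:ℝ)) (b := 2 * Real.pi) (μ := volume)
    (bound := fun _ => Real.exp (h + 1) / z * Real.exp ((1 + Real.exp (h + 1)) / z))
    (s := Metric.ball h 1) (Metric.ball_mem_nhds h one_pos)
    (Filter.Eventually.of_forall fun x => ((contE x).aestronglyMeasurable))
    ((contE h).intervalIntegrable _ _)
    ((contF' h).aestronglyMeasurable)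
    ?_ (intervalIntegrable_const) ?_
  · have : (∫ θ in (0:ℝ)..(2 * Real.pi), F' h θ)
        = Complex.exp h / z * G z (n + 1) h := by
      rw [hF', G, ← intervalIntegral.integral_const_mul]
    rw [← this]
    exact key.2
  · refine Filter.Eventually.of_forall fun θ => fun _ x hx => ?_
    have hx1 : x ≤ h + 1 := by
      have hd := mem_ball_iff_norm.1 hx
      rw [Real.norm_eq_abs] at hd
      have := abs_lt.1 hd
      linarith [this.2]
    rw [hF']
    rw [norm_mul, norm_mul, norm_div, norm_pow, nexp2, one_pow, one_mul]
    have h1 : ‖Complex.exp (x:ℂ)‖ = Real.exp x := by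
      simp [Complex.norm_exp]
    have h2 : ‖E z (Complex.exp (x:ℂ)) θ‖ ≤ Real.exp ((1 + Real.exp x) / z) := by
      have := norm_E_le z hz (Complex.exp (x:ℂ)) θ
      rwa [h1] at this
    have h3 : ‖(z:ℂ)‖ = z := by simp [abs_of_pos hz]
    rw [h1, h3]
    have hex : Real.exp x ≤ Real.exp (h + 1) := Real.exp_le_exp.2 hx1
    apply mul_le_mul
    · exact div_le_div_of_nonneg_right hex hz.le |>.trans_eq rfl
    · exact h2.trans (Real.exp_le_exp.2 (div_le_div_of_nonneg_right (by linarith) hz.le))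
    · exact norm_nonneg _
    · positivity
  · refine Filter.Eventually.of_forall fun θ => fun _ x _ => ?_
    have := (hasDerivAt_E_param z θ x).const_mul (Complex.exp (-(θ * I)) ^ n)
    have heq : Complex.exp (-(θ * I)) ^ n * (Complex.exp x * Complex.exp (-(θ * I)) / z
        * E z (Complex.exp x) θ) = F' x θ := by
      show _ = Complex.exp x / z * (Complex.exp (-(θ * I)) ^ (n+1) * E z (Complex.exp x) θ)
      rw [pow_succ]; ring
    rw [← heq]
    exact this

lemma key (z : ℝ) (hz : 0 < z) (h : ℝ) :
    (z : ℂ) * G z 1 h + Complex.exp h * G z 2 h = G z 0 h := by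
  set a := Complex.exp (h:ℂ) with ha
  have hz' : (z:ℂ) ≠ 0 := Complex.ofReal_ne_zero.2 hz.ne'
  have hΦ : ∀ θ : ℝ, HasDerivAt (fun θ : ℝ => I * z * Complex.exp (-(θ * I)) * E z a θ)
      ((z:ℂ) * Complex.exp (-(θ * I)) * E z a θ
        + a * Complex.exp (-(θ * I)) ^ 2 * E z a θ - E z a θ) θ := by
    intro θ
    have hID : HasDerivAt (fun θ : ℝ => (θ:ℂ) * I) I θ := by
      simpa using ((hasDerivAt_id (θ:ℂ)).mul_const I).comp_ofReal
    have hNeg : HasDerivAt (fun θ : ℝ => -((θ:ℂ) * I)) (-I) θ := hID.neg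
    have hv : HasDerivAt (fun θ : ℝ => Complex.exp (-((θ:ℂ) * I)))
        (Complex.exp (-((θ:ℂ) * I)) * -I) θ := hNeg.cexp
    have hq : HasDerivAt
        (fun θ : ℝ => (Complex.exp ((θ:ℂ) * I) + a * Complex.exp (-((θ:ℂ) * I))) / z)
        ((Complex.exp ((θ:ℂ) * I) * I + a * (Complex.exp (-((θ:ℂ) * I)) * -I)) / z) θ :=
      (hID.cexp.add (hv.const_mul a)).div_const z
    have hE : HasDerivAt (fun θ : ℝ => E z a θ)
        (E z a θ * ((Complex.exp ((θ:ℂ) * I) * I + a * (Complex.exp (-((θ:ℂ) * I)) * -I)) / z))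
        θ := hq.cexp
    have hprod := (hv.const_mul (I * z)).mul hE
    have huv : Complex.exp ((θ:ℂ) * I) * Complex.exp (-((θ:ℂ) * I)) = 1 := by
      rw [← Complex.exp_add]; simp
    have habs : ∀ (u v Ev : ℂ), u * v = 1 →
        I * (z:ℂ) * (v * -I) * Ev + I * z * v * (Ev * ((u * I + a * (v * -I)) / z))
          = (z:ℂ) * v * Ev + a * v ^ 2 * Ev - Ev := by
      intro u v Ev huv
      have step : I * (z:ℂ) * v * (Ev * ((u * I + a * (v * -I)) / z))
          = I * v * Ev * (u * I + a * (v * -I)) := by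
        field_simp
      rw [step]
      linear_combination (-(z:ℂ)*v*Ev + u*v*Ev - a*v^2*Ev) * Complex.I_sq + (-Ev) * huv
    have heq := habs (Complex.exp ((θ:ℂ) * I)) (Complex.exp (-((θ:ℂ) * I))) (E z a θ) huv
    rw [heq] at hprod
    exact hprod
  have hcont : ∀ n : ℕ, Continuous fun θ : ℝ => Complex.exp (-(θ * I)) ^ n * E z a θ := by
    intro n; exact (Continuous.pow (by fun_prop) n).mul (continuous_E z a)
  have hint : ∀ n : ℕ, IntervalIntegrable (fun θ : ℝ => Complex.exp (-(θ * I)) ^ n * E z a θ)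
      volume 0 (2 * Real.pi) := fun n => (hcont n).intervalIntegrable _ _
  have hsplit : (z : ℂ) * G z 1 h + a * G z 2 h - G z 0 h
      = ∫ θ in (0:ℝ)..(2 * Real.pi),
          ((z:ℂ) * Complex.exp (-(θ * I)) * E z a θ
            + a * Complex.exp (-(θ * I)) ^ 2 * E z a θ - E z a θ) := by
    rw [G, G, G]
    simp only [← ha]
    rw [← intervalIntegral.integral_const_mul, ← intervalIntegral.integral_const_mul,
      ← intervalIntegral.integral_add ((hint 1).const_mul _) ((hint 2).const_mul _),
      ← intervalIntegral.integral_sub (((hint 1).const_mul _).add ((hint 2).const_mul _)) (hint 0)]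
    refine intervalIntegral.integral_congr fun θ _ => ?_
    simp only [pow_zero, pow_one, one_mul]
    ring
  have hfund : (∫ θ in (0:ℝ)..(2 * Real.pi),
      ((z:ℂ) * Complex.exp (-(θ * I)) * E z a θ
        + a * Complex.exp (-(θ * I)) ^ 2 * E z a θ - E z a θ)) = 0 := by
    rw [intervalIntegral.integral_eq_sub_of_hasDerivAt (fun θ _ => hΦ θ)
      (Continuous.intervalIntegrable (by unfold E; fun_prop) _ _)]
    have h2pi : Complex.exp (-(((2 * Real.pi : ℝ) : ℂ) * I)) = Complex.exp (-(((0:ℝ):ℂ) * I)) := by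
      push_cast
      rw [Complex.exp_neg, Complex.exp_neg]
      rw [Complex.exp_two_pi_mul_I]
      simp
    have hE2pi : E z a (2 * Real.pi) = E z a 0 := by
      rw [E, E]
      push_cast
      rw [Complex.exp_two_pi_mul_I, Complex.exp_neg, Complex.exp_neg, Complex.exp_two_pi_mul_I]
      simp
    rw [h2pi, hE2pi]
    ring
  have h0 := hsplit.trans hfund
  linear_combination h0

end Sl2Aux

open Sl2Aux MeasureTheory intervalIntegral Metric in
/-- The contour integral `S(h) = ∮_{|u|=1} exp((u + e^h/u)/z) du/u` over the unit
circle (counterclockwise) equals `2πi·∑_{k≥0} e^{kh}/(z^{2k}(k!)²) = 2πi·I₀(2e^{h/2}/z)`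
and satisfies the quantum differential equation `z²·S''(h) = e^h·S(h)` of ℂP¹. -/
theorem sl2_toda_compact_cycle_solution (z : ℝ) (hz : 0 < z)
    (S : ℝ → ℂ)
    (hS : ∀ h : ℝ,
      S h = ∮ u in C(0, 1), Complex.exp ((u + Complex.exp h / u) / z) / u) :
    (∀ h : ℝ, S h = 2 * Real.pi * Complex.I *
      ∑' k : ℕ, Complex.exp (k * h) / ((z : ℂ) ^ (2 * k) * ((k.factorial : ℂ)) ^ 2)) ∧
    (∀ h : ℝ, (z : ℂ) ^ 2 * deriv (deriv S) h = Complex.exp h * S h) ∧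
    (∀ h : ℝ, S h = 2 * Real.pi * Complex.I *
      besselI0 (2 * Complex.exp ((h : ℂ) / 2) / z)) := by
  have hz' : (z:ℂ) ≠ 0 := Complex.ofReal_ne_zero.2 hz.ne'
  have hSG : ∀ h : ℝ, S h = I * G z 0 h := by
    intro h
    rw [hS h, circle_eq z (Complex.exp h)]
    congr 1
    rw [G]
    exact intervalIntegral.integral_congr fun θ _ => by rw [pow_zero, one_mul]
  have part1 : ∀ h : ℝ, S h = 2 * Real.pi * Complex.I *
      ∑' k : ℕ, Complex.exp (k * h) / ((z : ℂ) ^ (2 * k) * ((k.factorial : ℂ)) ^ 2) := by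
    intro h
    rw [hSG h]
    have hG0 : G z 0 h = ∫ θ in (0:ℝ)..(2 * Real.pi), E z (Complex.exp h) θ := by
      rw [G]
      exact intervalIntegral.integral_congr fun θ _ => by rw [pow_zero, one_mul]
    rw [hG0, integral_E z hz (Complex.exp h)]
    have hterm : ∀ k : ℕ, (Complex.exp (h:ℂ)) ^ k / ((z:ℂ) ^ (2 * k) * (k.factorial : ℂ) ^ 2)
        = Complex.exp ((k:ℂ) * (h:ℂ)) / ((z : ℂ) ^ (2 * k) * ((k.factorial : ℂ)) ^ 2) := by
      intro k
      rw [Complex.exp_nat_mul]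
    rw [tsum_congr hterm]
    push_cast
    ring
  refine ⟨part1, ?_, ?_⟩
  · -- the differential equation
    intro h
    have hfun : S = fun x : ℝ => I * G z 0 x := funext hSG
    have hd1 : ∀ x : ℝ, HasDerivAt S (I * (Complex.exp x / z * G z 1 x)) x := by
      intro x
      rw [hfun]
      exact (hasDerivAt_G z hz 0 x).const_mul I
    have hderivS : deriv S = fun x : ℝ => I * (Complex.exp x / z * G z 1 x) :=
      funext fun x => (hd1 x).deriv
    have hd2 : HasDerivAt (fun x : ℝ => I * (Complex.exp x / z * G z 1 x))
        (I * (Complex.exp h / z * G z 1 h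
          + Complex.exp h / z * (Complex.exp h / z * G z 2 h))) h := by
      have hf1 : HasDerivAt (fun x : ℝ => Complex.exp (x:ℂ) / z) (Complex.exp (h:ℂ) / z) h :=
        ((Complex.hasDerivAt_exp (h:ℂ)).comp_ofReal).div_const z
      exact (hf1.mul (hasDerivAt_G z hz 1 h)).const_mul I
    have hdd : deriv (deriv S) h = I * (Complex.exp h / z * G z 1 h
        + Complex.exp h / z * (Complex.exp h / z * G z 2 h)) := by
      rw [hderivS]
      exact hd2.deriv
    rw [hdd, hSG h]
    have hkey := key z hz h
    have expand : (z:ℂ) ^ 2 * (I * (Complex.exp (h:ℂ) / z * G z 1 h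
        + Complex.exp (h:ℂ) / z * (Complex.exp (h:ℂ) / z * G z 2 h)))
        = I * Complex.exp (h:ℂ) * ((z:ℂ) * G z 1 h + Complex.exp (h:ℂ) * G z 2 h) := by
      field_simp
    rw [expand, hkey]
    ring
  · intro h
    rw [part1 h]
    congr 1
    rw [besselI0]
    refine tsum_congr fun k => ?_
    have h24 : (2 * Complex.exp ((h:ℂ)/2) / (z:ℂ)) / 2 = Complex.exp ((h:ℂ)/2) / z := by
      ring
    rw [h24, div_pow, ← Complex.exp_nat_mul]
    have harg : ((2 * k : ℕ) : ℂ) * ((h:ℂ)/2) = (k:ℂ) * (h:ℂ) := by push_cast; ring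
    rw [harg, div_div]
end

section
/- In SL₂(ℂ), for a, b ∈ ℂ* and h ∈ ℂ, the element g = x(a)·d(e^{h/2})·y(b)⁻¹ satisfies g·B₊·g⁻¹ = B₋ (i.e., g maps the Borel of upper triangular matrices to the Borel of lower triangular matrices under conjugation) if and only if a·b = e^h. Here x(a) = [[1,a],[0,1]], y(b) = [[1,0],[b,1]], d(c) = [[c,0],[0,1/c]], B₊ is the group of upper triangular matrices in SL₂ and B₋ the lower triangular ones. -/
open Matrix

noncomputable section

/-- x(a) = [[1,a],[0,1]]. -/
def xMat (a : ℂ) : Matrix (Fin 2) (Fin 2) ℂ := !![1, a; 0, 1]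

/-- y(b) = [[1,0],[b,1]]. -/
def yMat (b : ℂ) : Matrix (Fin 2) (Fin 2) ℂ := !![1, 0; b, 1]

/-- d(c) = [[c,0],[0,1/c]]. -/
def dMat (c : ℂ) : Matrix (Fin 2) (Fin 2) ℂ := !![c, 0; 0, c⁻¹]

/-- The Borel subgroup B₊ of upper triangular matrices in SL₂(ℂ). -/
def BorelPlus : Set (Matrix (Fin 2) (Fin 2) ℂ) :=
  {b | b.det = 1 ∧ b 1 0 = 0}

/-- The Borel subgroup B₋ of lower triangular matrices in SL₂(ℂ). -/
def BorelMinus : Set (Matrix (Fin 2) (Fin 2) ℂ) :=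
  {b | b.det = 1 ∧ b 0 1 = 0}

/-! Conjugation by `g` sends `B₊` onto `B₋` exactly when `g` lies in `w₀ B₊`, i.e. when
`g₀₀ = 0`: for upper triangular `m` the `(0,1)` entry of `g m g⁻¹` is
`g₀₀ (g₀₀ m₀₁ + g₀₁ (m₁₁ - m₀₀)) / det g`. For `g = x(a) d(c) y(b)⁻¹` one has `det g = 1` and
`g₀₀ = c - ab/c`, which vanishes iff `ab = c² = e^h`. -/

namespace Matrix

variable {R : Type*} [CommRing R]

theorem mul_mul_adjugate_apply_zero_one (g m : Matrix (Fin 2) (Fin 2) R) :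
    (g * m * adjugate g) 0 1 =
      g 0 0 ^ 2 * m 0 1 - g 0 1 ^ 2 * m 1 0 + g 0 0 * g 0 1 * (m 1 1 - m 0 0) := by
  simp [mul_apply, Fin.sum_univ_two, adjugate_fin_two]
  ring

theorem adjugate_mul_mul_apply_one_zero (g m : Matrix (Fin 2) (Fin 2) R) :
    (adjugate g * m * g) 1 0 =
      g 0 0 ^ 2 * m 1 0 - g 1 0 ^ 2 * m 0 1 + g 0 0 * g 1 0 * (m 1 1 - m 0 0) := by
  simp [mul_apply, Fin.sum_univ_two, adjugate_fin_two, vecMul, dotProduct]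
  ring

end Matrix

open Matrix

theorem conj_image_upperBorel_eq_lowerBorel_iff {K : Type*} [Field K]
    {g : Matrix (Fin 2) (Fin 2) K} (hg : g.det ≠ 0) :
    (fun m => g * m * g⁻¹) '' {m | m.det = 1 ∧ m 1 0 = 0} = {m | m.det = 1 ∧ m 0 1 = 0} ↔
      g 0 0 = 0 := by
  have hgu : IsUnit g := (isUnit_iff_isUnit_det g).mpr hg.isUnit
  have conj_apply (m : Matrix (Fin 2) (Fin 2) K) :
      (g * m * g⁻¹) 0 1 = g.det⁻¹ * (g * m * adjugate g) 0 1 := by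
    rw [inv_def, Ring.inverse_eq_inv', mul_smul_comm, Matrix.smul_apply, smul_eq_mul]
  constructor
  · intro himage
    have hx : (g * (!![1, 1; 0, 1] : Matrix (Fin 2) (Fin 2) K) * g⁻¹) 0 1 = 0 :=
      (himage.subset ⟨_, ⟨by simp [det_fin_two_of], rfl⟩, rfl⟩).2
    rw [conj_apply, mul_mul_adjugate_apply_zero_one] at hx
    simpa [hg] using hx
  · intro hg00
    ext m'
    constructor
    · rintro ⟨m, ⟨hdet, hm10⟩, rfl⟩
      refine ⟨by rw [det_conj hgu, hdet], ?_⟩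
      dsimp only
      rw [conj_apply, mul_mul_adjugate_apply_zero_one, hg00, hm10]
      ring
    · rintro ⟨hdet, hm01⟩
      refine ⟨g⁻¹ * m' * g, ⟨by rw [det_conj' hgu, hdet], ?_⟩, ?_⟩
      · rw [inv_def, Ring.inverse_eq_inv', smul_mul_assoc, smul_mul_assoc, Matrix.smul_apply,
          adjugate_mul_mul_apply_one_zero, hg00, hm01, smul_eq_mul]
        ring
      · dsimp only
        rw [mul_assoc, mul_nonsing_inv_cancel_right _ _ hg.isUnit,
          mul_nonsing_inv_cancel_left _ _ hg.isUnit]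

theorem yMat_inv (b : ℂ) : (yMat b)⁻¹ = yMat (-b) :=
  inv_eq_left_inv (by simp [yMat, one_fin_two])

theorem det_xMat_mul_dMat_mul_yMat_inv {c : ℂ} (a b : ℂ) (hc : c ≠ 0) :
    (xMat a * dMat c * (yMat b)⁻¹).det = 1 := by
  rw [yMat_inv]
  simp [xMat, dMat, yMat]
  field_simp
  ring

theorem xMat_mul_dMat_mul_yMat_inv_apply_zero_zero (a b c : ℂ) :
    (xMat a * dMat c * (yMat b)⁻¹) 0 0 = c - a * b * c⁻¹ := by
  rw [yMat_inv]
  simp [xMat, dMat, yMat]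
  ring

theorem sl2_mirror_fiber_condition_general (a b : ℂ) (h : ℂ) :
    (let g := xMat a * dMat (Complex.exp (h / 2)) * (yMat b)⁻¹
     (fun m => g * m * g⁻¹) '' BorelPlus = BorelMinus) ↔ a * b = Complex.exp h := by
  have hc : Complex.exp (h / 2) ≠ 0 := Complex.exp_ne_zero _
  have hsq : Complex.exp (h / 2) * Complex.exp (h / 2) = Complex.exp h := by
    rw [← Complex.exp_add, add_halves]
  rw [BorelPlus, BorelMinus, conj_image_upperBorel_eq_lowerBorel_iff
    (by rw [det_xMat_mul_dMat_mul_yMat_inv _ _ hc]; exact one_ne_zero),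
    xMat_mul_dMat_mul_yMat_inv_apply_zero_zero, sub_eq_zero, ← hsq]
  constructor
  · intro h0
    field_simp at h0
    linear_combination -h0
  · intro hab
    field_simp
    linear_combination -hab

/-- For `g = x(a)·d(e^{h/2})·y(b)⁻¹` in SL₂(ℂ) with `a, b ∈ ℂ*`, we have
`g·B₊·g⁻¹ = B₋` if and only if `a·b = e^h`. -/
theorem sl2_mirror_fiber_condition (a b : ℂ) (h : ℂ) (ha : a ≠ 0) (hb : b ≠ 0) :
    (let g := xMat a * dMat (Complex.exp (h / 2)) * (yMat b)⁻¹
     (fun m => g * m * g⁻¹) '' BorelPlus = BorelMinus) ↔ a * b = Complex.exp h :=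
  sl2_mirror_fiber_condition_general a b h

end
end
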